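/- Fix T > 0 and L ≥ 1, and let G be the periodic heat kernel on [0,L]. Then for all s, t ∈ (0,T] and x, y ∈ [0,L], ∫_0^L G_t(x,z)² G_s(z,y)² dz ≤ √((t+s)/(4πst)) · ϑ(1/(2Tπ)) · G_{t+s}(x,y)², where ϑ(r) = ∑_{n∈ℤ} e^{−π n² r} is the Jacobi theta function. -/

import Mathlib

/-!
The Gaussian product formula `p_t(c) p_t(c + h) = p_{2t}(h) p_{t/2}(c + h/2)` expands
`G_t(x,·)²` as `∑_k p_{2t}(kL) G_{t/2}(x + kL/2, ·)`. With the Chapman–Kolmogorov identity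
for `G`, the integral becomes `∑_j w_j G_{(t+s)/2}(x + jL/2, y)` with
`w_j = ∑_k p_{2t}(kL) p_{2s}(jL - kL)`, while `G_{t+s}(x,y)²` has the same expansion with
weights `p_{2(t+s)}(jL)`. The general product formula factors `w_j` as `p_{2(t+s)}(jL)` times a
shifted Gaussian lattice sum; by the functional equation of the Hurwitz theta kernel a shift can
only decrease such a sum, so it is at most `√((t+s)/(4πst)) ϑ(1/(2Tπ))`. All sums and integrals
are taken in `ℝ≥0∞`, where they need no summability or integrability side conditions.
-/

open Real MeasureTheory

noncomputable def p (t x : ℝ) : ℝ :=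
  (Real.sqrt (2 * Real.pi * t))⁻¹ * Real.exp (-x ^ 2 / (2 * t))

/-- Periodic heat kernel on `[0, L]`. -/
noncomputable def GP (L t x y : ℝ) : ℝ :=
  ∑' n : ℤ, p t (x - y + n * L)

/-- Jacobi theta function. -/
noncomputable def theta (r : ℝ) : ℝ :=
  ∑' n : ℤ, Real.exp (-Real.pi * n ^ 2 * r)

open scoped ENNReal
open HurwitzZeta

lemma p_nonneg (t x : ℝ) : 0 ≤ p t x := by unfold p; positivity

@[fun_prop]
lemma continuous_p (t : ℝ) : Continuous (p t) := by unfold p; fun_prop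

lemma p_neg (t x : ℝ) : p t (-x) = p t x := by simp [p]

lemma p_mul_p {t s : ℝ} (ht : 0 < t) (hs : 0 < s) (a b : ℝ) :
    p t a * p s b = p (t + s) (a + b) * p (t * s / (t + s)) ((t * b - s * a) / (t + s)) := by
  have hsqrt :
      √(2 * π * t) * √(2 * π * s) = √(2 * π * (t + s)) * √(2 * π * (t * s / (t + s))) := by
    rw [← sqrt_mul (by positivity), ← sqrt_mul (by positivity)]
    congr 1
    field_simp
  have hexp : -a ^ 2 / (2 * t) + -b ^ 2 / (2 * s) = -(a + b) ^ 2 / (2 * (t + s)) +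
      -((t * b - s * a) / (t + s)) ^ 2 / (2 * (t * s / (t + s))) := by
    field_simp
    ring
  simp only [p]
  rw [mul_mul_mul_comm, ← mul_inv, hsqrt, ← exp_add, hexp, exp_add, mul_inv]
  ring

lemma p_mul_p_add {t : ℝ} (ht : 0 < t) (c h : ℝ) :
    p t c * p t (c + h) = p (2 * t) h * p (t / 2) (c + h / 2) := by
  rw [← p_neg t c, p_mul_p ht ht]
  congr 2 <;> field_simp <;> ring

lemma lintegral_ofReal_p {t : ℝ} (ht : 0 < t) : ∫⁻ x, ENNReal.ofReal (p t x) = 1 := by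
  have hp : p t = ProbabilityTheory.gaussianPDFReal 0 ⟨t, ht.le⟩ := by
    ext x
    simp only [p, ProbabilityTheory.gaussianPDFReal, sub_zero]
    rfl
  rw [hp]
  exact ProbabilityTheory.lintegral_gaussianPDFReal_eq_one 0 fun h => ht.ne' congr(NNReal.toReal $h)

lemma lintegral_ofReal_p_mul_p {t s : ℝ} (ht : 0 < t) (hs : 0 < s) (A B : ℝ) :
    ∫⁻ w, ENNReal.ofReal (p t (A - w) * p s (w - B)) = ENNReal.ofReal (p (t + s) (A - B)) := by
  have hw (w : ℝ) : p t (A - w) * p s (w - B) =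
      p (t + s) (A - B) * p (t * s / (t + s)) (w - (s * A + t * B) / (t + s)) := by
    rw [p_mul_p ht hs]
    congr 2
    · ring
    · field_simp
      ring
  simp_rw [hw, ENNReal.ofReal_mul (p_nonneg _ _)]
  rw [lintegral_const_mul _ (by fun_prop),
    lintegral_sub_right_eq_self (fun w => ENNReal.ofReal (p (t * s / (t + s)) w)),
    lintegral_ofReal_p (by positivity), mul_one]

lemma hasSum_p_int_add_mul {σ L : ℝ} (hσ : 0 < σ) (hL : 0 < L) (φ : ℝ) :
    HasSum (fun n : ℤ => p σ ((n + φ) * L))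
      ((√(2 * π * σ))⁻¹ * evenKernel φ (L ^ 2 / (2 * π * σ))) := by
  refine ((hasSum_int_evenKernel φ (by positivity)).mul_left _).congr_fun fun n => ?_
  simp only [p]
  congr 2
  field_simp

lemma summable_p_add_int_mul {t L : ℝ} (ht : 0 < t) (hL : 0 < L) (d : ℝ) :
    Summable fun n : ℤ => p t (d + n * L) := by
  refine (hasSum_p_int_add_mul ht hL (d / L)).summable.congr fun n => ?_
  congr 1
  field_simp
  ring

namespace HurwitzZeta

lemma cosKernel_le_cosKernel_zero (a : ℝ) {x : ℝ} (hx : 0 < x) :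
    cosKernel a x ≤ cosKernel 0 x := by
  have h0 : HasSum (fun n : ℤ => rexp (-π * n ^ 2 * x)) (cosKernel 0 x) := by
    simpa [← Complex.ofReal_exp, Complex.hasSum_ofReal] using hasSum_int_cosKernel 0 hx
  refine (le_abs_self _).trans ?_
  rw [← Real.norm_eq_abs, ← Complex.norm_real]
  refine (hasSum_int_cosKernel a hx).norm_le_of_bounded h0 fun n => ?_
  rw [norm_mul, Complex.norm_exp, Complex.norm_real, Real.norm_of_nonneg (exp_pos _).le]
  simp

-- Poisson summation turns the shift `a` into a phase, which can only lower the modulus.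
lemma evenKernel_le_evenKernel_zero (a : ℝ) {x : ℝ} (hx : 0 < x) :
    evenKernel a x ≤ evenKernel 0 x := by
  rw [evenKernel_functional_equation, evenKernel_functional_equation]
  gcongr
  exact cosKernel_le_cosKernel_zero a (by positivity)

end HurwitzZeta

lemma evenKernel_le_theta (a : ℝ) {r x : ℝ} (hr : 0 < r) (hrx : r ≤ x) :
    evenKernel a x ≤ theta r := by
  have hx : 0 < x := hr.trans_le hrx
  have h0 {y : ℝ} (hy : 0 < y) :
      HasSum (fun n : ℤ => rexp (-π * n ^ 2 * y)) (evenKernel 0 y) := by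
    simpa using hasSum_int_evenKernel 0 hy
  calc evenKernel a x ≤ evenKernel 0 x := evenKernel_le_evenKernel_zero a hx
    _ ≤ evenKernel 0 r := hasSum_le (fun n => exp_le_exp.2 (by
          nlinarith [mul_nonneg pi_pos.le (sq_nonneg (n : ℝ))])) (h0 hx) (h0 hr)
    _ = theta r := (h0 hr).tsum_eq.symm

lemma tsum_ofReal_p_int_add_mul_le {σ L r : ℝ} (hσ : 0 < σ) (hL : 0 < L) (hr : 0 < r)
    (hrσ : r ≤ L ^ 2 / (2 * π * σ)) (φ : ℝ) :
    ∑' n : ℤ, ENNReal.ofReal (p σ ((n + φ) * L)) ≤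
      ENNReal.ofReal ((√(2 * π * σ))⁻¹ * theta r) := by
  have h := hasSum_p_int_add_mul hσ hL φ
  rw [← ENNReal.ofReal_tsum_of_nonneg (fun _ => p_nonneg _ _) h.summable, h.tsum_eq]
  gcongr
  exact evenKernel_le_theta φ hr hrσ

lemma tsum_ofReal_p_mul_p_le {t s L T : ℝ} (ht : 0 < t) (hs : 0 < s) (hL : 1 ≤ L)
    (hT : t * s / (t + s) ≤ T) (u : ℝ) :
    ∑' k : ℤ, ENNReal.ofReal (p t (k * L) * p s (u - k * L)) ≤
      ENNReal.ofReal
        ((√(2 * π * (t * s / (t + s))))⁻¹ * theta (1 / (2 * T * π)) * p (t + s) u) := by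
  have hL0 : 0 < L := one_pos.trans_le hL
  have hσ : 0 < t * s / (t + s) := by positivity
  have hT0 : 0 < T := hσ.trans_le hT
  have hk (k : ℤ) : p t (k * L) * p s (u - k * L) =
      p (t + s) u * p (t * s / (t + s)) ((k + -(t * u / ((t + s) * L))) * L) := by
    rw [p_mul_p ht hs, ← p_neg (t * s / (t + s))]
    congr 2
    · ring
    · field_simp
      ring
  simp_rw [hk, ENNReal.ofReal_mul (p_nonneg _ _), ENNReal.tsum_mul_left]
  rw [mul_comm _ (p (t + s) u), ENNReal.ofReal_mul (p_nonneg _ _)]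
  gcongr
  refine tsum_ofReal_p_int_add_mul_le hσ hL0 (by positivity) ?_ _
  rw [div_le_div_iff₀ (by positivity) (by positivity), one_mul]
  have hL2 : 1 ≤ L ^ 2 := one_le_pow₀ hL
  calc 2 * π * (t * s / (t + s)) ≤ 2 * T * π := by nlinarith [pi_pos]
    _ ≤ L ^ 2 * (2 * T * π) := le_mul_of_one_le_left (by positivity) hL2

lemma GP_nonneg (L t x y : ℝ) : 0 ≤ GP L t x y := tsum_nonneg fun _ => p_nonneg _ _

lemma GP_congr {L t x y x' y' : ℝ} (h : x - y = x' - y') : GP L t x y = GP L t x' y' := by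
  simp only [GP, h]

lemma ofReal_GP {L t : ℝ} (ht : 0 < t) (hL : 0 < L) (x y : ℝ) :
    ENNReal.ofReal (GP L t x y) = ∑' n : ℤ, ENNReal.ofReal (p t (x - y + n * L)) :=
  ENNReal.ofReal_tsum_of_nonneg (fun _ => p_nonneg _ _) (summable_p_add_int_mul ht hL _)

@[fun_prop]
lemma Measurable.ofReal_GP {α : Type*} [MeasurableSpace α] {L t : ℝ} {f g : α → ℝ}
    (hf : Measurable f) (hg : Measurable g) (ht : 0 < t) (hL : 0 < L) :
    Measurable fun a => ENNReal.ofReal (GP L t (f a) (g a)) := by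
  simp_rw [_root_.ofReal_GP ht hL]
  exact Measurable.tsum fun n => by fun_prop

lemma lintegral_eq_tsum_setLIntegral_Ioc {L : ℝ} (hL : 0 < L) (g : ℝ → ℝ≥0∞) :
    ∫⁻ w, g w = ∑' n : ℤ, ∫⁻ z in Set.Ioc 0 L, g (z - n * L) := by
  have : VAddInvariantMeasure (AddSubgroup.zmultiples L) ℝ volume :=
    ⟨fun c s _ => measure_preimage_add _ _ _⟩
  let e : ℤ ≃ AddSubgroup.zmultiples L :=
    Equiv.ofBijective (fun n => ⟨n • L, n, rfl⟩)
      ⟨fun m n h => (zsmul_left_strictMono hL).injective congr(Subtype.val $h),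
        fun ⟨_, n, hn⟩ => ⟨n, Subtype.ext hn⟩⟩
  rw [(isAddFundamentalDomain_Ioc hL 0 volume).lintegral_eq_tsum' g, ← e.tsum_eq, zero_add]
  refine tsum_congr fun n => setLIntegral_congr_fun measurableSet_Ioc fun z _ => ?_
  simp only [e, Equiv.ofBijective_apply, sub_eq_neg_add, zsmul_eq_mul]
  rfl

lemma setLIntegral_ofReal_GP_mul_ofReal_GP {L t s : ℝ} (ht : 0 < t) (hs : 0 < s) (hL : 0 < L)
    (x y : ℝ) :
    ∫⁻ z in Set.Ioc 0 L, ENNReal.ofReal (GP L t x z) * ENNReal.ofReal (GP L s z y) =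
      ENNReal.ofReal (GP L (t + s) x y) := by
  have hprod (z : ℝ) : ENNReal.ofReal (GP L t x z) * ENNReal.ofReal (GP L s z y) =
      ∑' n : ℤ, ∑' j : ℤ,
        ENNReal.ofReal (p t (x - (z - n * L)) * p s (z - n * L - (y - j * L))) := by
    rw [ofReal_GP ht hL, ofReal_GP hs hL, ← ENNReal.tsum_mul_right]
    refine tsum_congr fun n => ?_
    rw [← ENNReal.tsum_mul_left, ← (Equiv.subRight n).tsum_eq]
    refine tsum_congr fun j => ?_
    rw [← ENNReal.ofReal_mul (p_nonneg _ _), Equiv.subRight_apply]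
    congr 3 <;> push_cast <;> ring
  calc _ = ∑' n : ℤ, ∑' j : ℤ, ∫⁻ z in Set.Ioc 0 L,
        ENNReal.ofReal (p t (x - (z - n * L)) * p s (z - n * L - (y - j * L))) := by
        simp_rw [hprod]
        rw [lintegral_tsum fun n => (Measurable.tsum fun j => by fun_prop).aemeasurable]
        exact tsum_congr fun n => lintegral_tsum fun j => by fun_prop
    _ = ∑' j : ℤ, ∫⁻ w, ENNReal.ofReal (p t (x - w) * p s (w - (y - j * L))) := by
        rw [ENNReal.tsum_comm]
        exact tsum_congr fun j => (lintegral_eq_tsum_setLIntegral_Ioc hL fun w =>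
          ENNReal.ofReal (p t (x - w) * p s (w - (y - j * L)))).symm
    _ = ENNReal.ofReal (GP L (t + s) x y) := by
        simp_rw [lintegral_ofReal_p_mul_p ht hs, ofReal_GP (add_pos ht hs) hL, sub_sub_eq_add_sub,
          add_sub_right_comm]

lemma ofReal_GP_sq {L t : ℝ} (ht : 0 < t) (hL : 0 < L) (x y : ℝ) :
    ENNReal.ofReal (GP L t x y ^ 2) =
      ∑' k : ℤ, ENNReal.ofReal (p (2 * t) (k * L)) *
        ENNReal.ofReal (GP L (t / 2) (x + k * L / 2) y) := by
  rw [sq, ENNReal.ofReal_mul (GP_nonneg _ _ _ _), ofReal_GP ht hL, ← ENNReal.tsum_mul_right]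
  have hshift (n : ℤ) :
      ENNReal.ofReal (p t (x - y + n * L)) * ∑' m : ℤ, ENNReal.ofReal (p t (x - y + m * L)) =
        ∑' k : ℤ, ENNReal.ofReal (p (2 * t) (k * L)) *
          ENNReal.ofReal (p (t / 2) (x + k * L / 2 - y + n * L)) := by
    rw [← ENNReal.tsum_mul_left, ← (Equiv.addLeft n).tsum_eq]
    refine tsum_congr fun k => ?_
    rw [← ENNReal.ofReal_mul (p_nonneg _ _), ← ENNReal.ofReal_mul (p_nonneg _ _),
      Equiv.coe_addLeft, Int.cast_add, add_mul, ← add_assoc, p_mul_p_add ht]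
    congr 3
    ring
  simp_rw [hshift]
  rw [ENNReal.tsum_comm]
  simp_rw [ENNReal.tsum_mul_left, ofReal_GP (half_pos ht) hL]

lemma setLIntegral_ofReal_GP_sq_mul_GP_sq {L t s : ℝ} (ht : 0 < t) (hs : 0 < s) (hL : 0 < L)
    (x y : ℝ) :
    ∫⁻ z in Set.Ioc 0 L, ENNReal.ofReal (GP L t x z ^ 2 * GP L s z y ^ 2) =
      ∑' j : ℤ, (∑' k : ℤ, ENNReal.ofReal (p (2 * t) (k * L) * p (2 * s) (j * L - k * L))) *
        ENNReal.ofReal (GP L ((t + s) / 2) (x + j * L / 2) y) := by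
  have hz (z : ℝ) : ENNReal.ofReal (GP L t x z ^ 2 * GP L s z y ^ 2) =
      ∑' k : ℤ, ∑' l : ℤ,
        ENNReal.ofReal (p (2 * t) (k * L)) * ENNReal.ofReal (p (2 * s) (l * L)) *
        (ENNReal.ofReal (GP L (t / 2) (x + k * L / 2) z) *
          ENNReal.ofReal (GP L (s / 2) z (y - l * L / 2))) := by
    rw [ENNReal.ofReal_mul (sq_nonneg _), ofReal_GP_sq ht hL, ofReal_GP_sq hs hL,
      ← ENNReal.tsum_mul_right]
    refine tsum_congr fun k => ?_
    rw [← ENNReal.tsum_mul_left]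
    refine tsum_congr fun l => ?_
    rw [GP_congr (show z + l * L / 2 - y = z - (y - l * L / 2) by ring)]
    ring
  calc _ = ∑' k : ℤ, ∑' l : ℤ,
        ENNReal.ofReal (p (2 * t) (k * L)) * ENNReal.ofReal (p (2 * s) (l * L)) *
        ENNReal.ofReal (GP L ((t + s) / 2) (x + (k + l : ℤ) * L / 2) y) := by
        simp_rw [hz]
        rw [lintegral_tsum fun k =>
          (Measurable.tsum fun l => by fun_prop (disch := positivity)).aemeasurable]
        refine tsum_congr fun k => ?_
        rw [lintegral_tsum fun l => by fun_prop (disch := positivity)]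
        refine tsum_congr fun l => ?_
        rw [lintegral_const_mul _ (by fun_prop (disch := positivity)),
          setLIntegral_ofReal_GP_mul_ofReal_GP (half_pos ht) (half_pos hs) hL, ← add_div,
          GP_congr (show x + k * L / 2 - (y - l * L / 2) = x + (k + l : ℤ) * L / 2 - y by
            push_cast; ring)]
    _ = _ := by
        rw [← tsum_congr fun k => (Equiv.subRight k).tsum_eq _, ENNReal.tsum_comm]
        refine tsum_congr fun j => ?_
        rw [← ENNReal.tsum_mul_right]
        refine tsum_congr fun k => ?_
        rw [Equiv.subRight_apply, add_sub_cancel, ENNReal.ofReal_mul (p_nonneg _ _), Int.cast_sub,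
          sub_mul]

lemma setLIntegral_ofReal_GP_sq_mul_GP_sq_le {L T t s : ℝ} (ht : 0 < t) (hs : 0 < s)
    (htT : t ≤ T) (hsT : s ≤ T) (hL : 1 ≤ L) (x y : ℝ) :
    ∫⁻ z in Set.Ioc 0 L, ENNReal.ofReal (GP L t x z ^ 2 * GP L s z y ^ 2) ≤
      ENNReal.ofReal (√((t + s) / (4 * π * s * t)) * theta (1 / (2 * T * π)) *
        GP L (t + s) x y ^ 2) := by
  have hL0 : 0 < L := one_pos.trans_le hL
  have hσT : 2 * t * (2 * s) / (2 * t + 2 * s) ≤ T := by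
    rw [div_le_iff₀ (by positivity)]
    nlinarith
  have hσ : (√(2 * π * (2 * t * (2 * s) / (2 * t + 2 * s))))⁻¹ =
      √((t + s) / (4 * π * s * t)) := by
    rw [← sqrt_inv]
    congr 1
    field_simp
    ring
  have hθ : 0 ≤ theta (1 / (2 * T * π)) := tsum_nonneg fun _ => (exp_pos _).le
  rw [setLIntegral_ofReal_GP_sq_mul_GP_sq ht hs hL0, ENNReal.ofReal_mul (by positivity),
    ofReal_GP_sq (by positivity) hL0, ← ENNReal.tsum_mul_left]
  refine ENNReal.tsum_le_tsum fun j => ?_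
  rw [← mul_assoc, ← ENNReal.ofReal_mul (by positivity), ← hσ, mul_add]
  exact mul_le_mul_left (tsum_ofReal_p_mul_p_le (by positivity) (by positivity) hL hσT _) _

theorem periodic_square_subsemigroup_general (T L : ℝ) (hL : 1 ≤ L)
    (s t : ℝ) (hs : s ∈ Set.Ioc 0 T) (ht : t ∈ Set.Ioc 0 T)
    (x y : ℝ) :
    ∫ z in (0 : ℝ)..L, (GP L t x z) ^ 2 * (GP L s z y) ^ 2
      ≤ Real.sqrt ((t + s) / (4 * Real.pi * s * t)) * theta (1 / (2 * T * Real.pi)) *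
        (GP L (t + s) x y) ^ 2 := by
  obtain ⟨ht0, htT⟩ := ht
  obtain ⟨hs0, hsT⟩ := hs
  have hθ : 0 ≤ theta (1 / (2 * T * π)) := tsum_nonneg fun _ => (exp_pos _).le
  have hint : 0 ≤ ∫ z in Set.Ioc 0 L, GP L t x z ^ 2 * GP L s z y ^ 2 :=
    setIntegral_nonneg measurableSet_Ioc fun _ _ => by positivity
  rw [intervalIntegral.integral_of_le (zero_le_one.trans hL),
    ← ENNReal.ofReal_le_ofReal_iff (by positivity), ← Real.enorm_eq_ofReal hint]
  refine (enorm_integral_le_lintegral_enorm _).trans ?_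
  refine le_of_eq_of_le (lintegral_congr fun z => Real.enorm_eq_ofReal (by positivity)) ?_
  exact setLIntegral_ofReal_GP_sq_mul_GP_sq_le ht0 hs0 htT hsT hL x y

theorem periodic_square_subsemigroup (T L : ℝ) (hT : 0 < T) (hL : 1 ≤ L)
    (s t : ℝ) (hs : s ∈ Set.Ioc 0 T) (ht : t ∈ Set.Ioc 0 T)
    (x y : ℝ) (hx : x ∈ Set.Icc 0 L) (hy : y ∈ Set.Icc 0 L) :
    ∫ z in (0 : ℝ)..L, (GP L t x z) ^ 2 * (GP L s z y) ^ 2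
      ≤ Real.sqrt ((t + s) / (4 * Real.pi * s * t)) * theta (1 / (2 * T * Real.pi)) *
        (GP L (t + s) x y) ^ 2 :=
  periodic_square_subsemigroup_general T L hL s t hs ht x y
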